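/- arXiv:0806.0732 — 4 statements merged into one kernel-verified Lean document; each statement's English description precedes it below -/
import Mathlib

section
/- Let G be a C^r diffeomorphism (r ≥ 3) between open subsets of E = ℝ^{2d+1} that preserves the standard contact form α_0 = dx_0 + x^-·dx^+ − x^+·dx^- and the vector field v_0 = ∂/∂x_0, and suppose G(0) = 0. Write G(x_0, x^+, x^-) = (x_0 + G_0(x^+, x^-), G_+(x^+, x^-), G_-(x^+, x^-)) on a small disk around 0. Then DG_0(0) = 0 and D²G_0(0) = 0, i.e. the first and second derivatives of the function G_0 vanish at the origin. -/
/-!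
On the slice `x₀ = 0`, write `h = (G₊, G₋)` and `ω(p, q) = p⁻ · q⁺ - p⁺ · q⁻`. Preservation of
`α₀ = dx₀ + ω(x, dx)` reads `dG₀(w) v + ω(h w, dh(w) v) = ω(w, v)`. At `w = 0`, where `h 0 = 0`,
this gives `dG₀(0) = 0`. Differentiating once more gives
`D²G₀(0)(u, v) = ω(u, v) - ω(dh(0) u, dh(0) v)`, which is antisymmetric in `(u, v)`; being also
symmetric, it vanishes.
-/

open Filter Topology

section

variable {E F H : Type*} [NormedAddCommGroup E] [NormedSpace ℝ E]
  [NormedAddCommGroup F] [NormedSpace ℝ F] [NormedAddCommGroup H] [NormedSpace ℝ H]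

theorem fderiv_apply_zero_prod {f : E × F → H} {x : E} {y : F}
    (hf : DifferentiableAt ℝ f (x, y)) (v : F) :
    fderiv ℝ f (x, y) (0, v) = fderiv ℝ (fun y => f (x, y)) y v :=
  (DFunLike.congr_fun (hf.hasFDerivAt.comp y (hasFDerivAt_prodMk_right x y)).fderiv v).symm

theorem fderiv_eq_zero_and_fderiv_fderiv_eq_zero_of_fderiv_add_pullback
    {ωE : E →L[ℝ] E →L[ℝ] ℝ} {ωF : F →L[ℝ] F →L[ℝ] ℝ}
    (hωE : ∀ u v, ωE u v = -ωE v u) (hωF : ∀ u v, ωF u v = -ωF v u)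
    {φ : E → ℝ} {h : E → F} (hφ : ContDiffAt ℝ 2 φ 0) (hh : ContDiffAt ℝ 2 h 0) (h0 : h 0 = 0)
    (hid : ∀ᶠ w in 𝓝 0, ∀ v, fderiv ℝ φ w v + ωF (h w) (fderiv ℝ h w v) = ωE w v) :
    fderiv ℝ φ 0 = 0 ∧ fderiv ℝ (fderiv ℝ φ) 0 = 0 := by
  refine ⟨ContinuousLinearMap.ext fun v => by simpa [h0] using hid.self_of_nhds v, ?_⟩
  have hφ' := ((hφ.fderiv_right (m := 1) le_rfl).differentiableAt one_ne_zero).hasFDerivAt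
  have hh' := ((hh.fderiv_right (m := 1) le_rfl).differentiableAt one_ne_zero).hasFDerivAt
  have hdh := (hh.differentiableAt two_ne_zero).hasFDerivAt
  have hsecond : ∀ u v, fderiv ℝ (fderiv ℝ φ) 0 u v + ωF (fderiv ℝ h 0 u) (fderiv ℝ h 0 v)
      = ωE u v := by
    intro u v
    have hL := (hφ'.clm_apply (hasFDerivAt_const v 0)).add
      (ωF.hasFDerivAt_of_bilinear hdh (hh'.clm_apply (hasFDerivAt_const v 0)))
    have hR : HasFDerivAt (fun w => ωE w v) (ωE.flip v) 0 := (ωE.flip v).hasFDerivAt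
    have := DFunLike.congr_fun ((hL.congr_of_eventuallyEq
      (hid.mono fun w hw => (hw v).symm)).unique hR) u
    simpa [h0] using this
  ext u v
  rw [zero_apply, zero_apply]
  have hsymm := (hφ.isSymmSndFDerivAt (by simp)).eq u v
  linarith [hsecond u v, hsecond v u, hωE u v, hωF (fderiv ℝ h 0 u) (fderiv ℝ h 0 v)]

end

noncomputable def symplecticForm (d : ℕ) :
    ((Fin d → ℝ) × (Fin d → ℝ)) →L[ℝ] ((Fin d → ℝ) × (Fin d → ℝ)) →L[ℝ] ℝ :=
  (LinearMap.mk₂ ℝ (fun p q => ∑ i, p.2 i * q.1 i - ∑ i, p.1 i * q.2 i)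
    (fun _ _ _ => by simp only [Prod.fst_add, Prod.snd_add, Pi.add_apply, add_mul,
      Finset.sum_add_distrib]; ring)
    (fun _ _ _ => by simp only [Prod.smul_fst, Prod.smul_snd, Pi.smul_apply, smul_eq_mul,
      mul_assoc, ← Finset.mul_sum]; ring)
    (fun _ _ _ => by simp only [Prod.fst_add, Prod.snd_add, Pi.add_apply, mul_add,
      Finset.sum_add_distrib]; ring)
    (fun _ _ _ => by simp only [Prod.smul_fst, Prod.smul_snd, Pi.smul_apply, smul_eq_mul,
      mul_left_comm _ (_ : ℝ), ← Finset.mul_sum]; ring)).toContinuousBilinearMap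

theorem symplecticForm_apply (d : ℕ) (p q : (Fin d → ℝ) × (Fin d → ℝ)) :
    symplecticForm d p q = ∑ i, p.2 i * q.1 i - ∑ i, p.1 i * q.2 i := rfl

theorem symplecticForm_apply_swap (d : ℕ) (p q : (Fin d → ℝ) × (Fin d → ℝ)) :
    symplecticForm d p q = -symplecticForm d q p := by
  simp only [symplecticForm_apply, mul_comm (p.2 _), mul_comm (p.1 _)]
  ring

theorem stmt1_general (d r : ℕ) (hr : 3 ≤ r)
    (α₀ : (ℝ × (Fin d → ℝ) × (Fin d → ℝ)) → (ℝ × (Fin d → ℝ) × (Fin d → ℝ)) → ℝ)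
    (hα₀ : ∀ z v, α₀ z v =
      v.1 + (∑ i, z.2.2 i * v.2.1 i) - ∑ i, z.2.1 i * v.2.2 i)
    (V' : Set (ℝ × (Fin d → ℝ) × (Fin d → ℝ)))
    (G : (ℝ × (Fin d → ℝ) × (Fin d → ℝ)) → (ℝ × (Fin d → ℝ) × (Fin d → ℝ)))
    (hGdiff : ContDiffOn ℝ r G V')
    (hcontact : ∀ x ∈ V', ∀ v, α₀ (G x) (fderiv ℝ G x v) = α₀ x v)
    (hG0 : G 0 = 0)
    (D : Set (ℝ × (Fin d → ℝ) × (Fin d → ℝ))) (hD : IsOpen D)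
    (h0D : (0 : ℝ × (Fin d → ℝ) × (Fin d → ℝ)) ∈ D) (hDV : D ⊆ V')
    (G₀ : ((Fin d → ℝ) × (Fin d → ℝ)) → ℝ)
    (Gp Gm : ((Fin d → ℝ) × (Fin d → ℝ)) → (Fin d → ℝ))
    (hform : ∀ x ∈ D, G x = (x.1 + G₀ x.2, Gp x.2, Gm x.2)) :
    fderiv ℝ G₀ (0 : (Fin d → ℝ) × (Fin d → ℝ)) = 0 ∧
    fderiv ℝ (fun w => fderiv ℝ G₀ w) (0 : (Fin d → ℝ) × (Fin d → ℝ)) = 0 := by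
  set S := {w | ((0 : ℝ), w) ∈ D}
  set g := fun w => G ((0 : ℝ), w)
  have hS : IsOpen S := hD.preimage (by fun_prop)
  have h0S : (0 : (Fin d → ℝ) × (Fin d → ℝ)) ∈ S := h0D
  have hGD : ContDiffOn ℝ r G D := hGdiff.mono hDV
  have hg : ∀ w ∈ S, ContDiffAt ℝ 2 g w := fun w hw =>
    ((hGD.comp (contDiff_const.prodMk contDiff_id).contDiffOn fun _ hw => hw).contDiffAt
      (hS.mem_nhds hw)).of_le (by norm_cast; omega)
  have hG₀ : ∀ w ∈ S, G₀ =ᶠ[𝓝 w] fun w => (g w).1 :=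
    fun w hw => eventually_of_mem (hS.mem_nhds hw) fun w hw => by simp [g, hform _ hw]
  refine fderiv_eq_zero_and_fderiv_fderiv_eq_zero_of_fderiv_add_pullback
    (symplecticForm_apply_swap d) (symplecticForm_apply_swap d) (h := fun w => (g w).2)
    ((contDiffAt_fst.comp 0 (hg 0 h0S)).congr_of_eventuallyEq (hG₀ 0 h0S))
    (contDiffAt_snd.comp 0 (hg 0 h0S)) (by simp [g, Prod.mk_zero_zero, hG0]) ?_
  filter_upwards [hS.mem_nhds h0S] with w hw v
  have hgw := (hg w hw).differentiableAt two_ne_zero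
  have hGw : DifferentiableAt ℝ G ((0 : ℝ), w) :=
    (hGD.contDiffAt (hD.mem_nhds hw)).differentiableAt (by norm_cast; omega)
  have hcontact_slice := hcontact _ (hDV hw) (0, v)
  rw [hα₀, hα₀, fderiv_apply_zero_prod hGw] at hcontact_slice
  rw [(hG₀ w hw).fderiv_eq, fderiv.fst hgw, fderiv.snd hgw, symplecticForm_apply,
    symplecticForm_apply, ← add_sub_assoc]
  simpa [g] using hcontact_slice

theorem stmt1 (d r : ℕ) (hr : 3 ≤ r)
    (α₀ : (ℝ × (Fin d → ℝ) × (Fin d → ℝ)) → (ℝ × (Fin d → ℝ) × (Fin d → ℝ)) → ℝ)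
    (hα₀ : ∀ z v, α₀ z v =
      v.1 + (∑ i, z.2.2 i * v.2.1 i) - ∑ i, z.2.1 i * v.2.2 i)
    (V' : Set (ℝ × (Fin d → ℝ) × (Fin d → ℝ))) (hV' : IsOpen V')
    (G : (ℝ × (Fin d → ℝ) × (Fin d → ℝ)) → (ℝ × (Fin d → ℝ) × (Fin d → ℝ)))
    (hGdiff : ContDiffOn ℝ r G V') (hGinj : Set.InjOn G V')
    (hcontact : ∀ x ∈ V', ∀ v, α₀ (G x) (fderiv ℝ G x v) = α₀ x v)
    (hv₀ : ∀ x ∈ V', fderiv ℝ G x (1, 0, 0) = (1, 0, 0))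
    (h0V : (0 : ℝ × (Fin d → ℝ) × (Fin d → ℝ)) ∈ V')
    (hG0 : G 0 = 0)
    (D : Set (ℝ × (Fin d → ℝ) × (Fin d → ℝ))) (hD : IsOpen D)
    (h0D : (0 : ℝ × (Fin d → ℝ) × (Fin d → ℝ)) ∈ D) (hDV : D ⊆ V')
    (G₀ : ((Fin d → ℝ) × (Fin d → ℝ)) → ℝ)
    (Gp Gm : ((Fin d → ℝ) × (Fin d → ℝ)) → (Fin d → ℝ))
    (hform : ∀ x ∈ D, G x = (x.1 + G₀ x.2, Gp x.2, Gm x.2)) :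
    fderiv ℝ G₀ (0 : (Fin d → ℝ) × (Fin d → ℝ)) = 0 ∧
    fderiv ℝ (fun w => fderiv ℝ G₀ w) (0 : (Fin d → ℝ) × (Fin d → ℝ)) = 0 :=
  stmt1_general d r hr α₀ hα₀ V' G hGdiff hcontact hG0 D hD h0D hDV G₀ Gp Gm hform
end

section
/- For pairs (n,k), (n',k') of integers with n, n' ≥ 0 indexing the functions χ_{n,k}(ξ) = ρ(2^{−n/2}ξ_0 − k)·χ_n(ξ_0), define Δ(n,k,n',k') = log₂⁺(2^{−n'/2}·d(supp χ̃_{n,k}, supp χ_{n',k'})) where log₂⁺ t = max{0, log₂ t}. Then: (i) Δ(n,k,n',k') ≤ max{n,n'} − n'/2 + 2 always; (ii) if |n − n'| ≥ 2 and max{n,n'} ≥ 10 then Δ(n,k,n',k') ≥ max{n,n'} − n'/2 − 3; and consequently (iii) |n − n'| ≤ 2Δ(n,k,n',k') + 10 in general. -/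
/-- Distance between two subsets of ℝ. -/
noncomputable def setDist (A B : Set ℝ) : ℝ := sInf (Set.image2 dist A B)

private lemma two_rpow_pos (a : ℝ) : 0 < (2:ℝ)^a := Real.rpow_pos_of_pos two_pos a
private lemma two_rpow_mono {a b : ℝ} (h : a ≤ b) : (2:ℝ)^a ≤ (2:ℝ)^b :=
  (Real.rpow_le_rpow_left_iff one_lt_two).mpr h
private lemma two_rpow_add (a b : ℝ) : (2:ℝ)^(a+b) = (2:ℝ)^a * (2:ℝ)^b :=
  Real.rpow_add two_pos a b
private lemma two_rpow_neg (a : ℝ) : (2:ℝ)^(-a) = ((2:ℝ)^a)⁻¹ :=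
  Real.rpow_neg (by norm_num) a

section helpers

variable {χ ρ : ℝ → ℝ}
  (hχrange : ∀ s, χ s ∈ Set.Icc (0:ℝ) 1)
  (hχone : ∀ s : ℝ, s ≤ 4/3 → χ s = 1) (hχzero : ∀ s : ℝ, 5/3 ≤ s → χ s = 0)
  (hρ : ∀ s, ρ s = χ (s+1) - χ (s+2))

include hχrange hχone hχzero hρ in
private lemma rho_nonneg (s : ℝ) : 0 ≤ ρ s := by
  rw [hρ]
  rcases le_or_gt (s+1) (4/3) with h | h
  · have h1 := hχone _ h
    have h2 := (hχrange (s+2)).2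
    linarith
  · have h2 : χ (s+2) = 0 := hχzero _ (by linarith)
    have h1 := (hχrange (s+1)).1
    linarith

include hχone hχzero hρ in
private lemma rho_supp {s : ℝ} (h : ρ s ≠ 0) : |s| ≤ 2/3 := by
  by_contra hc
  push_neg at hc
  rcases lt_or_ge s 0 with hs | hs
  · have hs' : s ≤ -(2/3) := by rcases abs_cases s with ⟨h1,_⟩|⟨h1,_⟩ <;> linarith
    exact h (by rw [hρ, hχone _ (by linarith), hχone _ (by linarith)]; ring)
  · have hs' : 2/3 ≤ s := by rcases abs_cases s with ⟨h1,_⟩|⟨h1,_⟩ <;> linarith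
    exact h (by rw [hρ, hχzero _ (by linarith), hχzero _ (by linarith)]; ring)

variable {X : ℕ → ℝ → ℝ}
  (hX0 : ∀ s, X 0 s = χ |s|)
  (hXn : ∀ n : ℕ, 1 ≤ n → ∀ s,
      X n s = χ ((2:ℝ)^(-(n:ℝ)) * |s|) - χ ((2:ℝ)^(-(n:ℝ)+1) * |s|))

include hχone hχzero hX0 hXn in
private lemma X_bounds (n : ℕ) (ξ : ℝ) (h : X n ξ ≠ 0) :
    |ξ| ≤ 5/3 * (2:ℝ)^(n:ℝ) ∧ (1 ≤ n → 2/3 * (2:ℝ)^(n:ℝ) ≤ |ξ|) := by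
  rcases Nat.eq_zero_or_pos n with rfl | hn
  · constructor
    · by_contra hc
      push_neg at hc
      have h0 : ((0:ℕ):ℝ) = (0:ℝ) := by norm_num
      rw [h0, Real.rpow_zero] at hc
      exact h (by rw [hX0]; exact hχzero _ (by linarith))
    · intro h1; exact absurd h1 (by norm_num)
  · have hn1 : 1 ≤ n := hn
    set p := (2:ℝ)^(n:ℝ) with hp
    have hppos : 0 < p := two_rpow_pos _
    have hinv : (2:ℝ)^(-(n:ℝ)) = p⁻¹ := two_rpow_neg _
    have hinv2 : (2:ℝ)^(-(n:ℝ)+1) = p⁻¹ * 2 := by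
      rw [two_rpow_add, hinv, Real.rpow_one]
    rw [hXn n hn1, hinv, hinv2] at h
    constructor
    · by_contra hc
      push_neg at hc
      have e1 : (5:ℝ)/3 ≤ p⁻¹ * |ξ| := by
        rw [inv_mul_eq_div, le_div_iff₀ hppos]; nlinarith
      have e2 : (5:ℝ)/3 ≤ p⁻¹ * 2 * |ξ| := by nlinarith
      rw [hχzero _ e1, hχzero _ e2] at h
      exact h (by ring)
    · intro _
      by_contra hc
      push_neg at hc
      have e0 : p⁻¹ * |ξ| < 2/3 := by
        rw [inv_mul_eq_div, div_lt_iff₀ hppos]; nlinarith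
      have e1 : p⁻¹ * |ξ| ≤ 4/3 := by linarith
      have e2 : p⁻¹ * 2 * |ξ| ≤ 4/3 := by nlinarith
      rw [hχone _ e1, hχone _ e2] at h
      exact h (by ring)

end helpers

set_option maxHeartbeats 1000000

/- STATEMENT 6: For Δ(n,k,n',k') = log₂⁺(2^{−n'/2}·d(supp χ̃_{n,k}, supp χ_{n',k'})):
(i) Δ ≤ max{n,n'} − n'/2 + 2; (ii) if |n−n'| ≥ 2 and max{n,n'} ≥ 10 then
Δ ≥ max{n,n'} − n'/2 − 3; (iii) |n−n'| ≤ 2Δ + 10. -/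
theorem stmt6 (χ : ℝ → ℝ) (hχsmooth : ContDiff ℝ (⊤ : ℕ∞) χ)
    (hχrange : ∀ s, χ s ∈ Set.Icc (0:ℝ) 1)
    (hχone : ∀ s : ℝ, s ≤ 4/3 → χ s = 1) (hχzero : ∀ s : ℝ, 5/3 ≤ s → χ s = 0)
    (ρ : ℝ → ℝ) (hρ : ∀ s, ρ s = χ (s+1) - χ (s+2))
    (X : ℕ → ℝ → ℝ)
    (hX0 : ∀ s, X 0 s = χ |s|)
    (hXn : ∀ n : ℕ, 1 ≤ n → ∀ s,
      X n s = χ ((2:ℝ)^(-(n:ℝ)) * |s|) - χ ((2:ℝ)^(-(n:ℝ)+1) * |s|))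
    (chiNK tchiNK : ℕ → ℤ → ℝ → ℝ)
    (hchiNK : ∀ n k ξ, chiNK n k ξ = ρ ((2:ℝ)^(-(n:ℝ)/2) * ξ - k) * X n ξ)
    (htchiNK : ∀ n k ξ, tchiNK n k ξ =
      ρ ((2:ℝ)^(-(n:ℝ)/2) * ξ - ((k:ℝ) - 1)) + ρ ((2:ℝ)^(-(n:ℝ)/2) * ξ - k)
        + ρ ((2:ℝ)^(-(n:ℝ)/2) * ξ - ((k:ℝ) + 1)))
    (Δ : ℕ → ℤ → ℕ → ℤ → ℝ)
    (hΔ : ∀ n k n' k', Δ n k n' k' = max 0 (Real.logb 2 ((2:ℝ)^(-(n':ℝ)/2) *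
      setDist (Function.support (tchiNK n k)) (Function.support (chiNK n' k')))))
    (n n' : ℕ) (k k' : ℤ)
    (hnk : ∃ ξ, chiNK n k ξ ≠ 0) (hn'k' : ∃ ξ, chiNK n' k' ξ ≠ 0) :
    (Δ n k n' k' ≤ max (n:ℝ) (n':ℝ) - (n':ℝ)/2 + 2) ∧
    (2 ≤ |(n:ℤ) - (n':ℤ)| → 10 ≤ max n n' →
      max (n:ℝ) (n':ℝ) - (n':ℝ)/2 - 3 ≤ Δ n k n' k') ∧
    (|(n:ℝ) - (n':ℝ)| ≤ 2 * Δ n k n' k' + 10) := by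
  clear hχsmooth
  have hρ0 : ∀ s, 0 ≤ ρ s := rho_nonneg hχrange hχone hχzero hρ
  have hρs : ∀ s : ℝ, ρ s ≠ 0 → |s| ≤ 2/3 := fun s => rho_supp hχone hχzero hρ
  have hXb := X_bounds hχone hχzero hX0 hXn
  obtain ⟨ξ₀, h0⟩ := hnk
  obtain ⟨ξ₁, h1⟩ := hn'k'
  -- abbreviations
  set A := Function.support (tchiNK n k) with hA
  set B := Function.support (chiNK n' k') with hB
  set d := setDist A B with hd
  set u := (2:ℝ)^(-(n:ℝ)/2) with hu
  set u' := (2:ℝ)^(-(n':ℝ)/2) with hu'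
  set pn := (2:ℝ)^(n:ℝ) with hpn
  set pn' := (2:ℝ)^(n':ℝ) with hpn'
  set sn := (2:ℝ)^((n:ℝ)/2) with hsn
  set sn' := (2:ℝ)^((n':ℝ)/2) with hsn'
  have hpnpos : 0 < pn := two_rpow_pos _
  have hpn'pos : 0 < pn' := two_rpow_pos _
  have hsnpos : 0 < sn := two_rpow_pos _
  have hsn'pos : 0 < sn' := two_rpow_pos _
  have huinv : u = sn⁻¹ := by rw [hu, hsn, neg_div, two_rpow_neg]
  have hu'inv : u' = sn'⁻¹ := by rw [hu', hsn', neg_div, two_rpow_neg]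
  have hsu : sn * u = 1 := by rw [huinv]; field_simp
  have hΔ' : Δ n k n' k' = max 0 (Real.logb 2 (u' * d)) := by
    rw [hΔ n k n' k', ← hA, ← hB, ← hd, ← hu']
  -- witness facts
  rw [hchiNK] at h0 h1
  have h0ρ : ρ (u * ξ₀ - k) ≠ 0 := fun hz => h0 (by rw [hz, zero_mul])
  have h0X : X n ξ₀ ≠ 0 := fun hz => h0 (by rw [hz, mul_zero])
  have h1X : X n' ξ₁ ≠ 0 := fun hz => h1 (by rw [hz, mul_zero])
  have hξ₀k : |u * ξ₀ - k| ≤ 2/3 := hρs _ h0ρ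
  have hξ₀u : |ξ₀| ≤ 5/3 * pn := (hXb n ξ₀ h0X).1
  have hξ₀l : 1 ≤ n → 2/3 * pn ≤ |ξ₀| := (hXb n ξ₀ h0X).2
  have hξ₁u : |ξ₁| ≤ 5/3 * pn' := (hXb n' ξ₁ h1X).1
  have hA0 : ξ₀ ∈ A := by
    rw [hA, Function.mem_support, htchiNK]
    have t2 : 0 < ρ (u * ξ₀ - k) := (hρ0 _).lt_of_ne (Ne.symm h0ρ)
    have t1 := hρ0 (u * ξ₀ - ((k:ℝ) - 1))
    have t3 := hρ0 (u * ξ₀ - ((k:ℝ) + 1))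
    intro heq
    rw [← hu] at heq
    linarith
  have hB1 : ξ₁ ∈ B := by
    rw [hB, Function.mem_support, hchiNK, ← hu']
    exact h1
  -- support bounds for A
  have hAk : ∀ a ∈ A, |u * a - k| ≤ 5/3 := by
    intro a ha
    have ha' := Function.mem_support.mp ha
    rw [htchiNK, ← hu] at ha'
    by_contra hc
    push_neg at hc
    apply ha'
    have z1 : ρ (u * a - ((k:ℝ) - 1)) = 0 := by
      by_contra hz
      have h2 := abs_le.mp (hρs _ hz)
      have : |u * a - k| ≤ 5/3 := abs_le.mpr ⟨by linarith [h2.1], by linarith [h2.2]⟩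
      linarith
    have z2 : ρ (u * a - (k:ℝ)) = 0 := by
      by_contra hz
      have h2 := hρs _ hz
      linarith
    have z3 : ρ (u * a - ((k:ℝ) + 1)) = 0 := by
      by_contra hz
      have h2 := abs_le.mp (hρs _ hz)
      have : |u * a - k| ≤ 5/3 := abs_le.mpr ⟨by linarith [h2.1], by linarith [h2.2]⟩
      linarith
    rw [z1, z2, z3]; ring
  have hAd : ∀ a ∈ A, |a - ξ₀| ≤ 7/3 * sn := by
    intro a ha
    have h2 := hAk a ha
    have h3 : |u * a - u * ξ₀| ≤ 7/3 := by
      have h4 : |(u * a - k) + -(u * ξ₀ - k)| ≤ |u * a - k| + |(-(u * ξ₀ - k))| :=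
        abs_add_le _ _
      rw [abs_neg] at h4
      have e : u * a - u * ξ₀ = (u * a - k) + -(u * ξ₀ - k) := by ring
      rw [e]
      linarith
    have e : a - ξ₀ = sn * (u * a - u * ξ₀) := by
      rw [mul_sub, ← mul_assoc, ← mul_assoc, hsu, one_mul, one_mul]
    calc |a - ξ₀| = sn * |u * a - u * ξ₀| := by
          rw [e, abs_mul, abs_of_pos hsnpos]
      _ ≤ sn * (7/3) := mul_le_mul_of_nonneg_left h3 hsnpos.le
      _ = 7/3 * sn := by ring
  have hAu : ∀ a ∈ A, |a| ≤ 5/3 * pn + 7/3 * sn := by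
    intro a ha
    have h2 := hAd a ha
    have h3 := abs_sub_abs_le_abs_sub a ξ₀
    linarith
  have hAl : 1 ≤ n → ∀ a ∈ A, 2/3 * pn - 7/3 * sn ≤ |a| := by
    intro hn1 a ha
    have h2 := hAd a ha
    have h3 := abs_sub_abs_le_abs_sub ξ₀ a
    rw [abs_sub_comm ξ₀ a] at h3
    have := hξ₀l hn1
    linarith
  -- support bounds for B
  have hBu : ∀ b ∈ B, |b| ≤ 5/3 * pn' := by
    intro b hb
    have hb' := Function.mem_support.mp hb
    rw [hchiNK] at hb'
    exact (hXb n' b (fun hz => hb' (by rw [hz, mul_zero]))).1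
  have hBl : 1 ≤ n' → ∀ b ∈ B, 2/3 * pn' ≤ |b| := by
    intro hn1 b hb
    have hb' := Function.mem_support.mp hb
    rw [hchiNK] at hb'
    exact (hXb n' b (fun hz => hb' (by rw [hz, mul_zero]))).2 hn1
  -- distance facts
  have hdef : d = sInf (Set.image2 dist A B) := hd.trans rfl
  have hmem : dist ξ₀ ξ₁ ∈ Set.image2 dist A B := Set.mem_image2_of_mem hA0 hB1
  have hbdd : BddBelow (Set.image2 dist A B) := by
    refine ⟨0, ?_⟩
    rintro x ⟨a, ha, b, hb, rfl⟩
    exact dist_nonneg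
  have hd0 : 0 ≤ d := by
    rw [hdef]
    exact Real.sInf_nonneg (by rintro x ⟨a, ha, b, hb, rfl⟩; exact dist_nonneg)
  have hdub : d ≤ |ξ₀| + |ξ₁| := by
    rw [hdef]
    refine le_trans (csInf_le hbdd hmem) ?_
    rw [Real.dist_eq]
    exact abs_sub _ _
  -- max abbreviations
  set m := max n n' with hm0
  have hmR : max (n:ℝ) (n':ℝ) = (m:ℝ) := by rw [hm0]; simp [Nat.cast_max]
  have hnm : (n:ℝ) ≤ (m:ℝ) := Nat.cast_le.mpr (le_max_left _ _)
  have hn'm : (n':ℝ) ≤ (m:ℝ) := Nat.cast_le.mpr (le_max_right _ _)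
  have hpm : pn ≤ (2:ℝ)^(m:ℝ) := two_rpow_mono hnm
  have hpm' : pn' ≤ (2:ℝ)^(m:ℝ) := two_rpow_mono hn'm
  have hpmpos : 0 < (2:ℝ)^(m:ℝ) := two_rpow_pos _
  -- PART (i)
  have part1 : Δ n k n' k' ≤ max (n:ℝ) (n':ℝ) - (n':ℝ)/2 + 2 := by
    rw [hΔ', hmR]
    have hR0 : (0:ℝ) ≤ (m:ℝ) - (n':ℝ)/2 + 2 := by
      have : (0:ℝ) ≤ (n':ℝ) := Nat.cast_nonneg _
      linarith
    refine max_le hR0 ?_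
    have hdu : d ≤ 10/3 * (2:ℝ)^(m:ℝ) := by linarith
    have e : (2:ℝ)^((m:ℝ) - (n':ℝ)/2 + 2) = (2:ℝ)^(m:ℝ) * sn'⁻¹ * 4 := by
      rw [show (m:ℝ) - (n':ℝ)/2 + 2 = (m:ℝ) + (-((n':ℝ)/2)) + (2:ℝ) from by ring,
        two_rpow_add, two_rpow_add, two_rpow_neg,
        show (2:ℝ)^(2:ℝ) = 4 from by norm_num, ← hsn']
    have hx : u' * d ≤ (2:ℝ)^((m:ℝ) - (n':ℝ)/2 + 2) := by
      rw [e, hu'inv]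
      have hip : (0:ℝ) < sn'⁻¹ := inv_pos.mpr hsn'pos
      have h2 := mul_le_mul_of_nonneg_left hdu hip.le
      nlinarith [mul_nonneg hip.le hpmpos.le]
    rcases eq_or_lt_of_le (mul_nonneg (hu'inv ▸ inv_pos.mpr hsn'pos).le hd0) with heq | hpos
    · rw [← heq, Real.logb_zero]
      exact hR0
    · exact (Real.logb_le_iff_le_rpow one_lt_two hpos).mpr hx
  -- PART (ii)
  have part2 : 2 ≤ |(n:ℤ) - (n':ℤ)| → 10 ≤ max n n' →
      max (n:ℝ) (n':ℝ) - (n':ℝ)/2 - 3 ≤ Δ n k n' k' := by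
    intro habs hM10
    rw [hmR, hΔ']
    have hcase : n + 2 ≤ n' ∨ n' + 2 ≤ n := by
      rcases le_abs.mp habs with h | h
      · right; omega
      · left; omega
    have hdlb : (1/8) * (2:ℝ)^(m:ℝ) ≤ d := by
      rw [hdef]
      refine le_csInf ⟨_, hmem⟩ ?_
      rintro x ⟨a, ha, b, hb, rfl⟩
      rw [Real.dist_eq]
      rcases hcase with hcn' | hcn
      · -- n' = m, n' ≥ 10
        have hMn' : m = n' := by omega
        have h10 : (10:ℕ) ≤ n' := by omega
        have hb2 : 2/3 * pn' ≤ |b| := hBl (by omega) b hb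
        have ha2 : |a| ≤ 5/3 * pn + 7/3 * sn := hAu a ha
        have e1 : 4 * pn ≤ pn' := by
          have hexp : (n:ℝ) + 2 ≤ (n':ℝ) := by exact_mod_cast hcn'
          have h2 := two_rpow_mono hexp
          rw [two_rpow_add, ← hpn, show (2:ℝ)^(2:ℝ) = 4 from by norm_num, ← hpn'] at h2
          linarith
        have e2 : 32 * sn ≤ pn' := by
          have c1 : (n:ℝ) ≤ (n':ℝ) := by exact_mod_cast (by omega : n ≤ n')
          have c2 : (10:ℝ) ≤ (n':ℝ) := by exact_mod_cast h10
          have hexp : (n:ℝ)/2 + 5 ≤ (n':ℝ) := by linarith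
          have h2 := two_rpow_mono hexp
          rw [two_rpow_add, ← hsn, show (2:ℝ)^(5:ℝ) = 32 from by norm_num, ← hpn'] at h2
          linarith
        have tri : |b| - |a| ≤ |a - b| := by
          rw [abs_sub_comm a b]
          exact abs_sub_abs_le_abs_sub b a
        have hMe : (2:ℝ)^(m:ℝ) = pn' := by rw [hMn', ← hpn']
        rw [hMe]
        linarith
      · -- n = m, n ≥ 10
        have hMn : m = n := by omega
        have h10 : (10:ℕ) ≤ n := by omega
        have hb2 : |b| ≤ 5/3 * pn' := hBu b hb
        have ha2 : 2/3 * pn - 7/3 * sn ≤ |a| := hAl (by omega) a ha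
        have e1 : 4 * pn' ≤ pn := by
          have hexp : (n':ℝ) + 2 ≤ (n:ℝ) := by exact_mod_cast hcn
          have h2 := two_rpow_mono hexp
          rw [two_rpow_add, ← hpn', show (2:ℝ)^(2:ℝ) = 4 from by norm_num, ← hpn] at h2
          linarith
        have e2 : 32 * sn ≤ pn := by
          have c2 : (10:ℝ) ≤ (n:ℝ) := by exact_mod_cast h10
          have hexp : (n:ℝ)/2 + 5 ≤ (n:ℝ) := by linarith
          have h2 := two_rpow_mono hexp
          rw [two_rpow_add, ← hsn, show (2:ℝ)^(5:ℝ) = 32 from by norm_num, ← hpn] at h2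
          linarith
        have tri : |a| - |b| ≤ |a - b| := abs_sub_abs_le_abs_sub a b
        have hMe : (2:ℝ)^(m:ℝ) = pn := by rw [hMn, ← hpn]
        rw [hMe]
        linarith
    have hx : (2:ℝ)^((m:ℝ) - (n':ℝ)/2 - 3) ≤ u' * d := by
      have e : (2:ℝ)^((m:ℝ) - (n':ℝ)/2 - 3) = (2:ℝ)^(m:ℝ) * sn'⁻¹ * (1/8) := by
        rw [show (m:ℝ) - (n':ℝ)/2 - 3 = (m:ℝ) + (-((n':ℝ)/2)) + (-(3:ℝ)) from by ring,
          two_rpow_add, two_rpow_add, two_rpow_neg, two_rpow_neg,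
          show (2:ℝ)^(3:ℝ) = 8 from by norm_num, ← hsn']
        ring
      rw [e, hu'inv]
      have hip : (0:ℝ) < sn'⁻¹ := inv_pos.mpr hsn'pos
      have h2 := mul_le_mul_of_nonneg_left hdlb hip.le
      linarith
    have hxpos : 0 < u' * d := lt_of_lt_of_le (two_rpow_pos _) hx
    refine le_trans ?_ (le_max_right 0 _)
    exact (Real.le_logb_iff_rpow_le one_lt_two hxpos).mpr hx
  -- PART (iii)
  refine ⟨part1, part2, ?_⟩
  have hΔnn : 0 ≤ Δ n k n' k' := by rw [hΔ']; exact le_max_left _ _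
  by_cases hc : |(n:ℝ) - (n':ℝ)| ≤ 10
  · linarith
  · push_neg at hc
    have hcast : ((|(n:ℤ) - (n':ℤ)|:ℤ):ℝ) = |(n:ℝ) - (n':ℝ)| := by
      rw [Int.cast_abs]; push_cast; ring_nf
    have h11 : (10:ℤ) < |(n:ℤ) - (n':ℤ)| := by
      have : (10:ℝ) < ((|(n:ℤ) - (n':ℤ)|:ℤ):ℝ) := by rw [hcast]; exact hc
      exact_mod_cast this
    have h2 : 2 ≤ |(n:ℤ) - (n':ℤ)| := by omega
    have hM10 : 10 ≤ max n n' := by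
      rcases abs_cases ((n:ℤ) - (n':ℤ)) with ⟨he, _⟩ | ⟨he, _⟩ <;> omega
    have hp2 := part2 h2 hM10
    rw [hmR] at hp2
    have hmnn : (0:ℝ) ≤ (m:ℝ) := Nat.cast_nonneg _
    rcases abs_cases ((n:ℝ) - (n':ℝ)) with ⟨he, _⟩ | ⟨he, _⟩ <;> rw [he] <;> linarith
end

section
/- Let G : V' → V be a C^r diffeomorphism between open subsets of E = ℝ^{2d+1} preserving the standard contact form α_0 and the vector field v_0 = ∂/∂x_0. Let K ⊂ V' be compact. Then there exists C > 0 such that for all y, y' ∈ K and all ξ ∈ E* written as ξ = ξ_0·α_0(G(y)) + ξ_{+,-} with ξ_0 = π_0*(ξ) and ξ_{+,-} in the (ξ^+, ξ^-)-subspace: (1) ‖DG*_{y'}(ξ) − DG*_y(ξ)‖ ≤ C(|ξ_0|·‖y'−y‖² + ‖ξ_{+,-}‖·‖y'−y‖); and (2) |⟨ξ, D²G_{y'}(v, v')⟩| ≤ C(|ξ_0|·‖y'−y‖ + ‖ξ_{+,-}‖)·‖v‖·‖v'‖ for all v, v' ∈ E. -/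
/-!
Write `α₀ z = dx₀ + B z`, where `B` is a constant skew form. Differentiating the contact identity
`α₀ (G z) (DG_z v) = α₀ z v` and playing the symmetry of `D²G` against the skewness of `B` gives
`α₀ (G z) (D²G_z (w, v)) = 0` and `B (DG_z w) (DG_z v) = B w v`. Hence on `D²G_{y'}` the covector
`α₀ (G y)` reduces to `B (G y - G y')`, which is `O(‖y' - y‖)`, while
`α₀ (G y) ∘ (DG_{y'} - DG_y) = B R ∘ DG_{y'}` with `R` the first-order Taylor remainder of `G` at
`y'`, which is `O(‖y' - y‖²)`. Uniform `C²` bounds for `G` on the compact `K` finish the estimates.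
-/

open Filter Topology Metric

section CompactBounds

variable {E F : Type*} [NormedAddCommGroup E] [NormedSpace ℝ E]
  [NormedAddCommGroup F] [NormedSpace ℝ F] {f : E → F} {V K : Set E}

theorem ContDiffOn.exists_lipschitzOnWith_of_isOpen (hf : ContDiffOn ℝ 1 f V) (hV : IsOpen V)
    (hK : IsCompact K) (hKV : K ⊆ V) : ∃ L, LipschitzOnWith L f K :=
  LocallyLipschitzOn.exists_lipschitzOnWith_of_compact hK fun _ hx =>
    let ⟨L, t, ht, hL⟩ := (hf.contDiffAt (hV.mem_nhds (hKV hx))).exists_lipschitzOnWith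
    ⟨L, t, nhdsWithin_le_nhds ht, hL⟩

theorem le_max_mul_sq_of_le_mul {a t δ M A : ℝ} (hδ : 0 < δ) (hnear : t ≤ δ → a ≤ M * t ^ 2)
    (hfar : a ≤ A * t) : a ≤ max M (|A| / δ) * t ^ 2 := by
  rcases le_or_gt t δ with h | h
  · exact (hnear h).trans (by gcongr; exact le_max_left _ _)
  · have ht : 0 ≤ t := hδ.le.trans h.le
    calc a ≤ |A| * t := hfar.trans (by gcongr; exact le_abs_self A)
      _ ≤ |A| / δ * t ^ 2 := by
        rw [div_mul_eq_mul_div, le_div_iff₀ hδ, sq, ← mul_assoc]; gcongr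
      _ ≤ max M (|A| / δ) * t ^ 2 := by gcongr; exact le_max_right _ _

theorem ContDiffOn.exists_norm_taylor_remainder_le [ProperSpace E] (hf : ContDiffOn ℝ 2 f V)
    (hV : IsOpen V) (hK : IsCompact K) (hKV : K ⊆ V) :
    ∃ T, ∀ y ∈ K, ∀ y' ∈ K, ‖f y - f y' - fderiv ℝ f y' (y - y')‖ ≤ T * ‖y - y'‖ ^ 2 := by
  obtain ⟨δ, hδ, hδV⟩ := hK.exists_cthickening_subset_open hV hKV
  have hf' : ContDiffOn ℝ 1 (fderiv ℝ f) V := hf.fderiv_of_isOpen hV (by norm_num)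
  obtain ⟨Lf, hLf⟩ := (hf.of_le (by norm_num)).exists_lipschitzOnWith_of_isOpen hV hK hKV
  obtain ⟨LD, hLD⟩ := hf'.exists_lipschitzOnWith_of_isOpen hV hK.cthickening hδV
  obtain ⟨M, hM⟩ := hK.exists_bound_of_continuousOn (hf'.continuousOn.mono hKV)
  refine ⟨max LD (|Lf + M| / δ), fun y hy y' hy' =>
    le_max_mul_sq_of_le_mul hδ (fun hnear => ?_) ?_⟩
  · set t := ‖y - y'‖
    have hball : closedBall y' t ⊆ cthickening δ K :=
      (closedBall_subset_closedBall hnear).trans (closedBall_subset_cthickening hy' δ)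
    have hderiv : ∀ z ∈ closedBall y' t, HasFDerivWithinAt f (fderiv ℝ f z) (closedBall y' t) z :=
      fun z hz => ((hf.differentiableOn (by norm_num)).differentiableAt
        (hV.mem_nhds (hδV (hball hz)))).hasFDerivAt.hasFDerivWithinAt
    have hlip : ∀ z ∈ closedBall y' t, ‖fderiv ℝ f z - fderiv ℝ f y'‖ ≤ LD * t := fun z hz =>
      (hLD.norm_sub_le (hball hz) (hball (mem_closedBall_self (norm_nonneg _)))).trans
        (by gcongr; exact mem_closedBall_iff_norm.mp hz)
    calc ‖f y - f y' - fderiv ℝ f y' (y - y')‖ ≤ LD * t * t :=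
          (convex_closedBall y' t).norm_image_sub_le_of_norm_hasFDerivWithin_le' hderiv hlip
            (mem_closedBall_self (norm_nonneg _)) (mem_closedBall_iff_norm.mpr le_rfl)
      _ = LD * t ^ 2 := by ring
  · calc ‖f y - f y' - fderiv ℝ f y' (y - y')‖
        ≤ ‖f y - f y'‖ + ‖fderiv ℝ f y'‖ * ‖y - y'‖ :=
          (norm_sub_le _ _).trans (by gcongr; exact (fderiv ℝ f y').le_opNorm _)
      _ ≤ Lf * ‖y - y'‖ + M * ‖y - y'‖ := by gcongr; exacts [hLf.norm_sub_le hy hy', hM y' hy']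
      _ = (Lf + M) * ‖y - y'‖ := by ring

theorem ContDiffOn.exists_bounds_of_isCompact [ProperSpace E] (hf : ContDiffOn ℝ 2 f V)
    (hV : IsOpen V) (hK : IsCompact K) (hKV : K ⊆ V) :
    ∃ M ≥ 0, ∀ y ∈ K, ∀ y' ∈ K,
      ‖fderiv ℝ f y'‖ ≤ M ∧ ‖fderiv ℝ (fderiv ℝ f) y'‖ ≤ M ∧
      ‖f y - f y'‖ ≤ M * ‖y' - y‖ ∧ ‖fderiv ℝ f y' - fderiv ℝ f y‖ ≤ M * ‖y' - y‖ ∧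
      ‖f y - f y' - fderiv ℝ f y' (y - y')‖ ≤ M * ‖y' - y‖ ^ 2 := by
  have hf' : ContDiffOn ℝ 1 (fderiv ℝ f) V := hf.fderiv_of_isOpen hV (by norm_num)
  obtain ⟨M₁, hM₁⟩ := hK.exists_bound_of_continuousOn (hf'.continuousOn.mono hKV)
  obtain ⟨M₂, hM₂⟩ := hK.exists_bound_of_continuousOn
    ((hf'.continuousOn_fderiv_of_isOpen hV le_rfl).mono hKV)
  obtain ⟨Lf, hLf⟩ := (hf.of_le (by norm_num)).exists_lipschitzOnWith_of_isOpen hV hK hKV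
  obtain ⟨LD, hLD⟩ := hf'.exists_lipschitzOnWith_of_isOpen hV hK hKV
  obtain ⟨T, hT⟩ := hf.exists_norm_taylor_remainder_le hV hK hKV
  have hLf0 := Lf.coe_nonneg
  have hLD0 := LD.coe_nonneg
  refine ⟨|M₁| + |M₂| + Lf + LD + |T|, by positivity, fun y hy y' hy' => ⟨?_, ?_, ?_, ?_, ?_⟩⟩
  · exact (hM₁ y' hy').trans (by linarith [le_abs_self M₁, abs_nonneg M₂, abs_nonneg T])
  · exact (hM₂ y' hy').trans (by linarith [le_abs_self M₂, abs_nonneg M₁, abs_nonneg T])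
  · rw [norm_sub_rev y']
    exact (hLf.norm_sub_le hy hy').trans
      (by gcongr; linarith [abs_nonneg M₁, abs_nonneg M₂, abs_nonneg T])
  · exact (hLD.norm_sub_le hy' hy).trans
      (by gcongr; linarith [abs_nonneg M₁, abs_nonneg M₂, abs_nonneg T])
  · rw [norm_sub_rev y']
    exact (hT y hy y' hy').trans
      (by gcongr; linarith [le_abs_self T, abs_nonneg M₁, abs_nonneg M₂])

end CompactBounds

section Contact

/- `P + B z` models the contact form at `z`: an affine family of covectors with constant
derivative `B`. -/
variable {E : Type*} [NormedAddCommGroup E] [NormedSpace ℝ E]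
  {P : E →L[ℝ] ℝ} {B : E →L[ℝ] E →L[ℝ] ℝ} {G : E → E} {x : E}

/- Differentiate `(P + B (G z)) (DG_z v) = (P + B z) v` in the direction `w`. -/
theorem ContDiffAt.contactForm_fderiv_fderiv_add (hG : ContDiffAt ℝ 2 G x)
    (hc : ∀ᶠ z in 𝓝 x, ∀ v, (P + B (G z)) (fderiv ℝ G z v) = (P + B z) v) (v w : E) :
    (P + B (G x)) (fderiv ℝ (fderiv ℝ G) x w v) + B (fderiv ℝ G x w) (fderiv ℝ G x v) =
      B w v := by
  have hG1 : HasFDerivAt G (fderiv ℝ G x) x := (hG.differentiableAt (by norm_num)).hasFDerivAt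
  have hG2 : HasFDerivAt (fderiv ℝ G) (fderiv ℝ (fderiv ℝ G) x) x :=
    ((hG.fderiv_right (m := 1) (by norm_num)).differentiableAt one_ne_zero).hasFDerivAt
  have hlhs := ((hasFDerivAt_const P x).add (B.hasFDerivAt.comp x hG1)).clm_apply
    ((ContinuousLinearMap.apply ℝ E v).hasFDerivAt.comp x hG2)
  have hrhs := ((hasFDerivAt_const P x).add B.hasFDerivAt).clm_apply (hasFDerivAt_const v x)
  have h := congrArg (· w) ((hlhs.congr_of_eventuallyEq
    (hc.mono fun z hz => (hz v).symm)).unique hrhs)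
  simpa using h

theorem ContDiffAt.contactForm_fderiv_fderiv_eq_zero (hB : ∀ u v, B u v = -B v u)
    (hG : ContDiffAt ℝ 2 G x)
    (hc : ∀ᶠ z in 𝓝 x, ∀ v, (P + B (G z)) (fderiv ℝ G z v) = (P + B z) v) (v w : E) :
    (P + B (G x)) (fderiv ℝ (fderiv ℝ G) x w v) = 0 := by
  have hvw := hG.contactForm_fderiv_fderiv_add hc v w
  have hwv := hG.contactForm_fderiv_fderiv_add hc w v
  rw [hG.isSymmSndFDerivAt (by simp) v w] at hwv
  linarith [hB (fderiv ℝ G x w) (fderiv ℝ G x v), hB w v]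

theorem ContDiffAt.skewForm_fderiv_fderiv (hB : ∀ u v, B u v = -B v u)
    (hG : ContDiffAt ℝ 2 G x)
    (hc : ∀ᶠ z in 𝓝 x, ∀ v, (P + B (G z)) (fderiv ℝ G z v) = (P + B z) v) (v w : E) :
    B (fderiv ℝ G x w) (fderiv ℝ G x v) = B w v := by
  linarith [hG.contactForm_fderiv_fderiv_add hc v w,
    hG.contactForm_fderiv_fderiv_eq_zero hB hc v w]

variable {D : E → E →L[ℝ] E} {y y' : E} {ξ₀ : ℝ} {ξ ξpm : E →L[ℝ] ℝ}

theorem contactForm_comp_sub_eq (hy : ∀ v, (P + B (G y)) (D y v) = (P + B y) v)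
    (hy' : ∀ v, (P + B (G y')) (D y' v) = (P + B y') v)
    (hB : ∀ v w, B (D y' w) (D y' v) = B w v) :
    (P + B (G y)).comp (D y' - D y) = (B (G y - G y' - D y' (y - y'))).comp (D y') := by
  ext v
  have h₁ := hy v
  have h₂ := hy' v
  have h₃ := hB v (y - y')
  simp only [add_apply, ContinuousLinearMap.comp_apply, sub_apply, map_sub] at h₁ h₂ h₃ ⊢
  linarith

theorem norm_comp_sub_comp_le (hξ : ξ = ξ₀ • (P + B (G y)) + ξpm)
    (hy : ∀ v, (P + B (G y)) (D y v) = (P + B y) v)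
    (hy' : ∀ v, (P + B (G y')) (D y' v) = (P + B y') v)
    (hB : ∀ v w, B (D y' w) (D y' v) = B w v) :
    ‖ξ.comp (D y') - ξ.comp (D y)‖ ≤
      |ξ₀| * (‖B‖ * ‖G y - G y' - D y' (y - y')‖ * ‖D y'‖) + ‖ξpm‖ * ‖D y' - D y‖ := by
  rw [← ContinuousLinearMap.comp_sub, hξ, ContinuousLinearMap.add_comp,
    ContinuousLinearMap.smul_comp, contactForm_comp_sub_eq hy hy' hB]
  refine (norm_add_le _ _).trans ?_
  rw [norm_smul, Real.norm_eq_abs]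
  gcongr
  · exact (ContinuousLinearMap.opNorm_comp_le _ _).trans (by gcongr; exact B.le_opNorm _)
  · exact ContinuousLinearMap.opNorm_comp_le _ _

theorem abs_apply_le_of_contactForm_eq_zero {u : E} (hξ : ξ = ξ₀ • (P + B (G y)) + ξpm)
    (hu : (P + B (G y')) u = 0) :
    |ξ u| ≤ (|ξ₀| * (‖B‖ * ‖G y - G y'‖) + ‖ξpm‖) * ‖u‖ := by
  have hα : (P + B (G y)) u = B (G y - G y') u := by
    rw [map_sub, sub_apply, ← sub_zero ((P + B (G y)) u), ← hu]
    simp only [add_apply]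
    ring
  calc |ξ u| = |ξ₀ * B (G y - G y') u + ξpm u| := by
        rw [hξ, add_apply, smul_apply, hα, smul_eq_mul]
    _ ≤ |ξ₀| * |B (G y - G y') u| + |ξpm u| := by rw [← abs_mul]; exact abs_add_le _ _
    _ ≤ |ξ₀| * (‖B‖ * ‖G y - G y'‖ * ‖u‖) + ‖ξpm‖ * ‖u‖ := by
        gcongr
        exacts [B.le_opNorm₂ _ _, ξpm.le_opNorm _]
    _ = (|ξ₀| * (‖B‖ * ‖G y - G y'‖) + ‖ξpm‖) * ‖u‖ := by ring

theorem ContDiffOn.exists_contact_estimates [ProperSpace E] {V K : Set E}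
    (hB : ∀ u v, B u v = -B v u) (hG : ContDiffOn ℝ 2 G V) (hV : IsOpen V)
    (hc : ∀ x ∈ V, ∀ v, (P + B (G x)) (fderiv ℝ G x v) = (P + B x) v)
    (hK : IsCompact K) (hKV : K ⊆ V) :
    ∃ C > 0, ∀ y ∈ K, ∀ y' ∈ K, ∀ (ξ₀ : ℝ) (ξ ξpm : E →L[ℝ] ℝ),
      ξ = ξ₀ • (P + B (G y)) + ξpm →
      ‖ξ.comp (fderiv ℝ G y') - ξ.comp (fderiv ℝ G y)‖ ≤
        C * (|ξ₀| * ‖y' - y‖ ^ 2 + ‖ξpm‖ * ‖y' - y‖) ∧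
      ∀ v w, |ξ (fderiv ℝ (fderiv ℝ G) y' w v)| ≤
        C * (|ξ₀| * ‖y' - y‖ + ‖ξpm‖) * ‖v‖ * ‖w‖ := by
  have hc_nhds (x) (hx : x ∈ V) :
      ∀ᶠ z in 𝓝 x, ∀ v, (P + B (G z)) (fderiv ℝ G z v) = (P + B z) v :=
    eventually_of_mem (hV.mem_nhds hx) hc
  have hGx (x) (hx : x ∈ V) : ContDiffAt ℝ 2 G x := hG.contDiffAt (hV.mem_nhds hx)
  obtain ⟨M, hM0, hM⟩ := hG.exists_bounds_of_isCompact hV hK hKV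
  have hBM : 0 ≤ ‖B‖ * M ^ 2 := by positivity
  obtain ⟨C, hC0, hBC, hMC⟩ : ∃ C > 0, ‖B‖ * M ^ 2 ≤ C ∧ M ≤ C :=
    ⟨‖B‖ * M ^ 2 + M + 1, by positivity, by linarith, by linarith⟩
  refine ⟨C, hC0, fun y hy y' hy' ξ₀ ξ ξpm hξ => ?_⟩
  obtain ⟨hD, hD2, hGlip, hDlip, hTaylor⟩ := hM y hy y' hy'
  refine ⟨?_, fun v w => ?_⟩
  · calc _ ≤ |ξ₀| * (‖B‖ * ‖G y - G y' - fderiv ℝ G y' (y - y')‖ * ‖fderiv ℝ G y'‖) +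
          ‖ξpm‖ * ‖fderiv ℝ G y' - fderiv ℝ G y‖ :=
          norm_comp_sub_comp_le hξ (hc y (hKV hy)) (hc y' (hKV hy'))
            ((hGx y' (hKV hy')).skewForm_fderiv_fderiv hB (hc_nhds y' (hKV hy')))
      _ ≤ |ξ₀| * (‖B‖ * (M * ‖y' - y‖ ^ 2) * M) + ‖ξpm‖ * (M * ‖y' - y‖) := by gcongr
      _ = |ξ₀| * (‖B‖ * M ^ 2) * ‖y' - y‖ ^ 2 + ‖ξpm‖ * M * ‖y' - y‖ := by ring
      _ ≤ |ξ₀| * C * ‖y' - y‖ ^ 2 + ‖ξpm‖ * C * ‖y' - y‖ := by gcongr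
      _ = C * (|ξ₀| * ‖y' - y‖ ^ 2 + ‖ξpm‖ * ‖y' - y‖) := by ring
  · calc |ξ (fderiv ℝ (fderiv ℝ G) y' w v)|
        ≤ (|ξ₀| * (‖B‖ * ‖G y - G y'‖) + ‖ξpm‖) * ‖fderiv ℝ (fderiv ℝ G) y' w v‖ :=
          abs_apply_le_of_contactForm_eq_zero hξ
            ((hGx y' (hKV hy')).contactForm_fderiv_fderiv_eq_zero hB (hc_nhds y' (hKV hy')) v w)
      _ ≤ (|ξ₀| * (‖B‖ * (M * ‖y' - y‖)) + ‖ξpm‖) * (M * ‖w‖ * ‖v‖) := by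
          gcongr
          exact (ContinuousLinearMap.le_opNorm₂ _ _ _).trans (by gcongr)
      _ = |ξ₀| * (‖B‖ * M ^ 2) * ‖y' - y‖ * (‖v‖ * ‖w‖) + ‖ξpm‖ * M * (‖v‖ * ‖w‖) := by ring
      _ ≤ |ξ₀| * C * ‖y' - y‖ * (‖v‖ * ‖w‖) + ‖ξpm‖ * C * (‖v‖ * ‖w‖) := by gcongr
      _ = C * (|ξ₀| * ‖y' - y‖ + ‖ξpm‖) * ‖v‖ * ‖w‖ := by ring

end Contact

/- `B z v = z⁻ ⬝ᵥ v⁺ - z⁺ ⬝ᵥ v⁻`, so that `α₀ z = dx₀ + B z`. -/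
open Matrix in
noncomputable def contactSkewForm (d : ℕ) :
    (ℝ × (Fin d → ℝ) × (Fin d → ℝ)) →L[ℝ] (ℝ × (Fin d → ℝ) × (Fin d → ℝ)) →L[ℝ] ℝ :=
  LinearMap.toContinuousLinearMap
    ((LinearMap.toContinuousLinearMap : _ ≃ₗ[ℝ] _).toLinearMap ∘ₗ
      ((dotProductBilin ℝ ℝ).compl₁₂ (LinearMap.snd ℝ _ _ ∘ₗ LinearMap.snd ℝ _ _)
          (LinearMap.fst ℝ _ _ ∘ₗ LinearMap.snd ℝ _ _) -
        (dotProductBilin ℝ ℝ).compl₁₂ (LinearMap.fst ℝ _ _ ∘ₗ LinearMap.snd ℝ _ _)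
          (LinearMap.snd ℝ _ _ ∘ₗ LinearMap.snd ℝ _ _)))

open Matrix in
theorem contactSkewForm_apply (d : ℕ) (z v : ℝ × (Fin d → ℝ) × (Fin d → ℝ)) :
    contactSkewForm d z v = z.2.2 ⬝ᵥ v.2.1 - z.2.1 ⬝ᵥ v.2.2 := rfl

theorem contactSkewForm_swap (d : ℕ) (z v : ℝ × (Fin d → ℝ) × (Fin d → ℝ)) :
    contactSkewForm d z v = -contactSkewForm d v z := by
  simp only [contactSkewForm_apply, dotProduct_comm z.2.2, dotProduct_comm z.2.1]
  ring

theorem stmt10_general (d r : ℕ) (hr : 3 ≤ r)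
    (α₀ : (ℝ × (Fin d → ℝ) × (Fin d → ℝ)) → (ℝ × (Fin d → ℝ) × (Fin d → ℝ)) → ℝ)
    (hα₀ : ∀ z v, α₀ z v =
      v.1 + (∑ i, z.2.2 i * v.2.1 i) - ∑ i, z.2.1 i * v.2.2 i)
    (V' : Set (ℝ × (Fin d → ℝ) × (Fin d → ℝ))) (hV' : IsOpen V')
    (G : (ℝ × (Fin d → ℝ) × (Fin d → ℝ)) → (ℝ × (Fin d → ℝ) × (Fin d → ℝ)))
    (hGdiff : ContDiffOn ℝ r G V')
    (hcontact : ∀ x ∈ V', ∀ v, α₀ (G x) (fderiv ℝ G x v) = α₀ x v)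
    (K : Set (ℝ × (Fin d → ℝ) × (Fin d → ℝ))) (hK : IsCompact K) (hKV : K ⊆ V') :
    ∃ C > 0, ∀ y ∈ K, ∀ y' ∈ K, ∀ (ξ₀ : ℝ)
      (ξ ξpm : (ℝ × (Fin d → ℝ) × (Fin d → ℝ)) →L[ℝ] ℝ),
      (∀ v, ξ v = ξ₀ * α₀ (G y) v + ξpm v) →
      (ξpm (1, 0, 0) = 0) →
      (‖ξ.comp (fderiv ℝ G y') - ξ.comp (fderiv ℝ G y)‖ ≤
        C * (|ξ₀| * ‖y' - y‖^2 + ‖ξpm‖ * ‖y' - y‖)) ∧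
      (∀ v w : ℝ × (Fin d → ℝ) × (Fin d → ℝ),
        |ξ (fderiv ℝ (fun x => fderiv ℝ G x v) y' w)| ≤
          C * (|ξ₀| * ‖y' - y‖ + ‖ξpm‖) * ‖v‖ * ‖w‖) := by
  set B := contactSkewForm d
  set P := ContinuousLinearMap.fst ℝ ℝ ((Fin d → ℝ) × (Fin d → ℝ))
  have hα (z v) : α₀ z v = (P + B z) v := by
    rw [hα₀, add_apply, contactSkewForm_apply]
    simp only [dotProduct, P, ContinuousLinearMap.coe_fst']
    ring
  have hG : ContDiffOn ℝ 2 G V' := hGdiff.of_le (by exact_mod_cast (by omega : 2 ≤ r))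
  obtain ⟨C, hC0, hCest⟩ := hG.exists_contact_estimates (contactSkewForm_swap d) hV'
    (fun x hx v => by rw [← hα, ← hα, hcontact x hx v]) hK hKV
  refine ⟨C, hC0, fun y hy y' hy' ξ₀ ξ ξpm hξ _ => ?_⟩
  have hξ' : ξ = ξ₀ • (P + B (G y)) + ξpm :=
    ContinuousLinearMap.ext fun v => by simp only [hξ, hα, add_apply, smul_apply, smul_eq_mul]
  obtain ⟨hest₁, hest₂⟩ := hCest y hy y' hy' ξ₀ ξ ξpm hξ'
  refine ⟨hest₁, fun v w => ?_⟩
  rw [fderiv_clm_apply (((hG.contDiffAt (hV'.mem_nhds (hKV hy'))).fderiv_right (m := 1)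
    le_rfl).differentiableAt one_ne_zero) (differentiableAt_const v)]
  simpa using hest₂ v w

theorem stmt10 (d r : ℕ) (hr : 3 ≤ r)
    (α₀ : (ℝ × (Fin d → ℝ) × (Fin d → ℝ)) → (ℝ × (Fin d → ℝ) × (Fin d → ℝ)) → ℝ)
    (hα₀ : ∀ z v, α₀ z v =
      v.1 + (∑ i, z.2.2 i * v.2.1 i) - ∑ i, z.2.1 i * v.2.2 i)
    (V' : Set (ℝ × (Fin d → ℝ) × (Fin d → ℝ))) (hV' : IsOpen V')
    (G : (ℝ × (Fin d → ℝ) × (Fin d → ℝ)) → (ℝ × (Fin d → ℝ) × (Fin d → ℝ)))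
    (hGdiff : ContDiffOn ℝ r G V') (hGinj : Set.InjOn G V')
    (hcontact : ∀ x ∈ V', ∀ v, α₀ (G x) (fderiv ℝ G x v) = α₀ x v)
    (hv₀ : ∀ x ∈ V', fderiv ℝ G x (1, 0, 0) = (1, 0, 0))
    (K : Set (ℝ × (Fin d → ℝ) × (Fin d → ℝ))) (hK : IsCompact K) (hKV : K ⊆ V') :
    ∃ C > 0, ∀ y ∈ K, ∀ y' ∈ K, ∀ (ξ₀ : ℝ)
      (ξ ξpm : (ℝ × (Fin d → ℝ) × (Fin d → ℝ)) →L[ℝ] ℝ),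
      (∀ v, ξ v = ξ₀ * α₀ (G y) v + ξpm v) →
      (ξpm (1, 0, 0) = 0) →
      (‖ξ.comp (fderiv ℝ G y') - ξ.comp (fderiv ℝ G y)‖ ≤
        C * (|ξ₀| * ‖y' - y‖^2 + ‖ξpm‖ * ‖y' - y‖)) ∧
      (∀ v w : ℝ × (Fin d → ℝ) × (Fin d → ℝ),
        |ξ (fderiv ℝ (fun x => fderiv ℝ G x v) y' w)| ≤
          C * (|ξ₀| * ‖y' - y‖ + ‖ξpm‖) * ‖v‖ * ‖w‖) :=
  stmt10_general d r hr α₀ hα₀ V' hV' G hGdiff hcontact K hK hKV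
end

section
/- Let B be a Banach space and L : B → B a bounded operator. Suppose for some t_0 and all t > 3t_0 the operator L^t factors as L^t = A ∘ M^{t−2t_0} ∘ A' where A' : B → B', A : B' → B are bounded operators between Banach spaces and M : B' → B' is a bounded operator whose essential spectral radius is at most ρ < 1 (and A ∘ M^s ∘ A' = L^{s+2t_0} for all s ≥ 0 as operators on B, with L^{s}L^{s'} = L^{s+s'}). Then the essential spectral radius of L^t on B is at most ρ^t for every t, i.e. ρ_ess(L^t) ≤ ρ^t; in particular ρ_ess(L) ≤ ρ. -/
/-- The distance from an operator to the compact operators (the Calkin seminorm). -/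
noncomputable def essNorm {B : Type*} [NormedAddCommGroup B] [NormedSpace ℝ B]
    (T : B →L[ℝ] B) : ℝ :=
  sInf {r : ℝ | ∃ K : B →L[ℝ] B, IsCompactOperator ⇑K ∧ r = ‖T - K‖}

/-- The essential spectral radius, via Nussbaum's formula
ρ_ess(T) = inf_n ‖Tⁿ‖_K^{1/n}. -/
noncomputable def essSpectralRadius {B : Type*} [NormedAddCommGroup B] [NormedSpace ℝ B]
    (T : B →L[ℝ] B) : ℝ :=
  ⨅ n : ℕ, essNorm (T ^ (n+1)) ^ ((1:ℝ)/(n+1))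

/-!
The Calkin seminorm `‖T‖_K = essNorm T` is submultiplicative and satisfies
`‖A ∘ N ∘ A'‖_K ≤ ‖A‖ ‖A'‖ ‖N‖_K`. Hence for `ρ_ess(M) < r` one gets `‖Mˢ‖_K ≤ C rˢ` for all `s`
(split `s` modulo a period `p` with `‖Mᵖ‖_K < rᵖ`), so `‖L^(s + 2t₀)‖_K ≤ C' r^(s + 2t₀)`, and
taking `(n+1)`-th roots in the infimum defining `ρ_ess(L)` gives `ρ_ess(L) ≤ r`. The same
geometric bound for the powers of `L` gives `ρ_ess(Lᵗ) ≤ ρ_ess(L)ᵗ`.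
-/

open Filter Topology Asymptotics

section

variable {B B' : Type*} [NormedAddCommGroup B] [NormedSpace ℝ B]
  [NormedAddCommGroup B'] [NormedSpace ℝ B']

theorem essNorm_nonneg (T : B →L[ℝ] B) : 0 ≤ essNorm T :=
  Real.sInf_nonneg <| by rintro r ⟨K, -, rfl⟩; exact norm_nonneg _

theorem essNorm_le_norm_sub (T : B →L[ℝ] B) {K : B →L[ℝ] B} (hK : IsCompactOperator K) :
    essNorm T ≤ ‖T - K‖ :=
  csInf_le ⟨0, by rintro r ⟨K, -, rfl⟩; exact norm_nonneg _⟩ ⟨K, hK, rfl⟩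

theorem essNorm_le_mul_of_forall {S : B →L[ℝ] B} {T : B' →L[ℝ] B'} {c : ℝ} (hc : 0 ≤ c)
    (h : ∀ K : B' →L[ℝ] B', IsCompactOperator K → essNorm S ≤ c * ‖T - K‖) :
    essNorm S ≤ c * essNorm T := by
  rcases hc.eq_or_lt with rfl | hc
  · simpa using h 0 isCompactOperator_zero
  rw [← div_le_iff₀' hc]
  exact le_csInf ⟨_, 0, isCompactOperator_zero, rfl⟩ <| by
    rintro r ⟨K, hK, rfl⟩
    exact (div_le_iff₀' hc).2 (h K hK)

theorem essNorm_one_le : essNorm (1 : B →L[ℝ] B) ≤ 1 := by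
  calc essNorm (1 : B →L[ℝ] B) ≤ ‖(1 : B →L[ℝ] B) - 0‖ :=
        essNorm_le_norm_sub 1 isCompactOperator_zero
    _ ≤ 1 := by rw [sub_zero]; exact ContinuousLinearMap.norm_id_le

theorem essNorm_mul_le (S T : B →L[ℝ] B) : essNorm (S * T) ≤ essNorm S * essNorm T := by
  refine essNorm_le_mul_of_forall (essNorm_nonneg S) fun K₂ hK₂ ↦ ?_
  rw [mul_comm]
  refine essNorm_le_mul_of_forall (norm_nonneg _) fun K₁ hK₁ ↦ ?_
  have hK : IsCompactOperator ⇑(K₁ * T + (S - K₁) * K₂) :=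
    (hK₁.comp_clm T).add (hK₂.clm_comp (S - K₁))
  calc essNorm (S * T) ≤ ‖S * T - (K₁ * T + (S - K₁) * K₂)‖ := essNorm_le_norm_sub _ hK
    _ = ‖(S - K₁) * (T - K₂)‖ := by congr 1; noncomm_ring
    _ ≤ ‖T - K₂‖ * ‖S - K₁‖ := (norm_mul_le _ _).trans_eq (mul_comm _ _)

theorem essNorm_pow_le (T : B →L[ℝ] B) (k : ℕ) : essNorm (T ^ k) ≤ essNorm T ^ k := by
  induction k with
  | zero => simpa using essNorm_one_le
  | succ k ih =>
    calc essNorm (T ^ (k + 1)) ≤ essNorm (T ^ k) * essNorm T := by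
          rw [pow_succ]; exact essNorm_mul_le _ _
      _ ≤ essNorm T ^ k * essNorm T := by gcongr; exact essNorm_nonneg T
      _ = essNorm T ^ (k + 1) := (pow_succ _ _).symm

theorem essNorm_comp_comp_le (A : B' →L[ℝ] B) (A' : B →L[ℝ] B') (N : B' →L[ℝ] B') :
    essNorm (A.comp (N.comp A')) ≤ ‖A‖ * ‖A'‖ * essNorm N := by
  refine essNorm_le_mul_of_forall (by positivity) fun K hK ↦ ?_
  calc essNorm (A.comp (N.comp A')) ≤ ‖A.comp (N.comp A') - A.comp (K.comp A')‖ :=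
        essNorm_le_norm_sub _ ((hK.comp_clm A').clm_comp A)
    _ = ‖A.comp ((N - K).comp A')‖ := by
        rw [ContinuousLinearMap.sub_comp, ContinuousLinearMap.comp_sub]
    _ ≤ ‖A‖ * (‖N - K‖ * ‖A'‖) := by
        grw [ContinuousLinearMap.opNorm_comp_le, ContinuousLinearMap.opNorm_comp_le]
    _ = ‖A‖ * ‖A'‖ * ‖N - K‖ := by ring

theorem essSpectralRadius_nonneg (T : B →L[ℝ] B) : 0 ≤ essSpectralRadius T :=
  Real.iInf_nonneg fun _ ↦ Real.rpow_nonneg (essNorm_nonneg _) _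

theorem essSpectralRadius_le_essNorm_pow (T : B →L[ℝ] B) (n : ℕ) :
    essSpectralRadius T ≤ essNorm (T ^ (n + 1)) ^ ((1 : ℝ) / (n + 1)) :=
  ciInf_le ⟨0, by rintro _ ⟨k, rfl⟩; exact Real.rpow_nonneg (essNorm_nonneg _) _⟩ n

theorem exists_essNorm_pow_le_of_essSpectralRadius_lt {T : B →L[ℝ] B} {r : ℝ}
    (h : essSpectralRadius T < r) : ∃ C, ∀ n, essNorm (T ^ n) ≤ C * r ^ n := by
  have hr : 0 < r := (essSpectralRadius_nonneg T).trans_lt h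
  obtain ⟨m, hm⟩ := exists_lt_of_ciInf_lt h
  set p := m + 1
  have hp : essNorm (T ^ p) ≤ r ^ p := by
    have := pow_le_pow_left₀ (Real.rpow_nonneg (essNorm_nonneg _) _) hm.le p
    rwa [one_div, ← Nat.cast_add_one, Real.rpow_inv_natCast_pow (essNorm_nonneg _) m.succ_ne_zero]
      at this
  refine ⟨∑ i ∈ Finset.range p, essNorm (T ^ i) / r ^ i, fun n ↦ ?_⟩
  set j := n % p
  have hrn : r ^ n = r ^ j * (r ^ p) ^ (n / p) := by rw [← pow_mul, ← pow_add, Nat.mod_add_div]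
  calc essNorm (T ^ n) = essNorm (T ^ j * (T ^ p) ^ (n / p)) := by
        rw [← pow_mul, ← pow_add, Nat.mod_add_div]
    _ ≤ essNorm (T ^ j) * essNorm ((T ^ p) ^ (n / p)) := essNorm_mul_le _ _
    _ ≤ essNorm (T ^ j) * (r ^ p) ^ (n / p) := by
        gcongr
        · exact essNorm_nonneg _
        · exact (essNorm_pow_le _ _).trans (pow_le_pow_left₀ (essNorm_nonneg _) hp _)
    _ = essNorm (T ^ j) / r ^ j * r ^ n := by rw [hrn]; field_simp
    _ ≤ (∑ i ∈ Finset.range p, essNorm (T ^ i) / r ^ i) * r ^ n := by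
        gcongr
        exact Finset.single_le_sum (f := fun i ↦ essNorm (T ^ i) / r ^ i)
          (fun i _ ↦ div_nonneg (essNorm_nonneg _) (by positivity))
          (Finset.mem_range.2 (Nat.mod_lt n m.succ_pos))

theorem essSpectralRadius_le_of_isBigO {T : B →L[ℝ] B} {r : ℝ} (hr : 0 ≤ r)
    (h : (fun n ↦ essNorm (T ^ n)) =O[atTop] (r ^ ·)) : essSpectralRadius T ≤ r := by
  obtain ⟨C, hC, hCT⟩ := h.exists_pos
  have hbound : ∀ᶠ n : ℕ in atTop, essSpectralRadius T ≤ C ^ ((1 : ℝ) / (n + 1)) * r := by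
    filter_upwards [(tendsto_add_atTop_nat 1).eventually hCT.bound] with n hn
    rw [Real.norm_of_nonneg (essNorm_nonneg _), norm_pow, Real.norm_of_nonneg hr] at hn
    calc essSpectralRadius T ≤ essNorm (T ^ (n + 1)) ^ ((1 : ℝ) / (n + 1)) :=
          essSpectralRadius_le_essNorm_pow T n
      _ ≤ (C * r ^ (n + 1)) ^ ((1 : ℝ) / (n + 1)) := by gcongr; exact essNorm_nonneg _
      _ = C ^ ((1 : ℝ) / (n + 1)) * r := by
          rw [Real.mul_rpow hC.le (by positivity), one_div, ← Nat.cast_add_one,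
            Real.pow_rpow_inv_natCast hr n.succ_ne_zero]
  have hlim : Tendsto (fun n : ℕ ↦ C ^ ((1 : ℝ) / (n + 1)) * r) atTop (𝓝 r) := by
    simpa using ((Real.continuousAt_const_rpow hC.ne').tendsto.comp
      tendsto_one_div_add_atTop_nhds_zero_nat).mul_const r
  exact ge_of_tendsto hlim hbound

theorem essSpectralRadius_pow_le (T : B →L[ℝ] B) (t : ℕ) :
    essSpectralRadius (T ^ t) ≤ essSpectralRadius T ^ t := by
  have hlt : ∀ r, essSpectralRadius T < r → essSpectralRadius (T ^ t) ≤ r ^ t := by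
    intro r hr
    have hr0 : 0 ≤ r := (essSpectralRadius_nonneg T).trans hr.le
    obtain ⟨C, hC⟩ := exists_essNorm_pow_le_of_essSpectralRadius_lt hr
    refine essSpectralRadius_le_of_isBigO (by positivity) (isBigO_of_le' _ (c := C) fun n ↦ ?_)
    rw [Real.norm_of_nonneg (essNorm_nonneg _), Real.norm_of_nonneg (by positivity), ← pow_mul,
      ← pow_mul]
    exact hC (t * n)
  exact ge_of_tendsto ((continuous_pow t).continuousAt.tendsto.mono_left nhdsWithin_le_nhds)
    (eventually_nhdsWithin_of_forall (s := Set.Ioi _) hlt)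

theorem essSpectralRadius_le_of_pow_add_eq_comp (L : B →L[ℝ] B) (A : B' →L[ℝ] B)
    (A' : B →L[ℝ] B') (M : B' →L[ℝ] B') (k : ℕ)
    (hfact : ∀ s : ℕ, L ^ (s + k) = A.comp ((M ^ s).comp A')) :
    essSpectralRadius L ≤ essSpectralRadius M := by
  refine le_of_forall_gt_imp_ge_of_dense fun r hr ↦ ?_
  obtain ⟨C, hC⟩ := exists_essNorm_pow_le_of_essSpectralRadius_lt hr
  have hr0 : 0 < r := (essSpectralRadius_nonneg M).trans_lt hr
  refine essSpectralRadius_le_of_isBigO hr0.le (IsBigO.of_bound (‖A‖ * ‖A'‖ * C / r ^ k) ?_)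
  filter_upwards [eventually_ge_atTop k] with q hq
  obtain ⟨s, rfl⟩ := Nat.exists_eq_add_of_le' hq
  rw [Real.norm_of_nonneg (essNorm_nonneg _), Real.norm_of_nonneg (by positivity), hfact]
  calc essNorm (A.comp ((M ^ s).comp A')) ≤ ‖A‖ * ‖A'‖ * essNorm (M ^ s) :=
        essNorm_comp_comp_le A A' _
    _ ≤ ‖A‖ * ‖A'‖ * (C * r ^ s) := by gcongr; exact hC s
    _ = ‖A‖ * ‖A'‖ * C / r ^ k * r ^ (s + k) := by rw [pow_add]; field_simp

end

theorem stmt19_general {B B' : Type*} [NormedAddCommGroup B] [NormedSpace ℝ B]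
    [NormedAddCommGroup B'] [NormedSpace ℝ B']
    (L : B →L[ℝ] B) (t₀ : ℕ)
    (A : B' →L[ℝ] B) (A' : B →L[ℝ] B') (M : B' →L[ℝ] B')
    (hfact : ∀ s : ℕ, L ^ (s + 2*t₀) = A.comp ((M ^ s).comp A'))
    (ρ : ℝ)
    (hM : essSpectralRadius M ≤ ρ) :
    (∀ t : ℕ, essSpectralRadius (L ^ t) ≤ ρ ^ t) ∧ essSpectralRadius L ≤ ρ := by
  have hL : essSpectralRadius L ≤ ρ :=
    (essSpectralRadius_le_of_pow_add_eq_comp L A A' M (2 * t₀) hfact).trans hM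
  exact ⟨fun t ↦ (essSpectralRadius_pow_le L t).trans
    (pow_le_pow_left₀ (essSpectralRadius_nonneg L) hL t), hL⟩

theorem stmt19 {B B' : Type*} [NormedAddCommGroup B] [NormedSpace ℝ B] [CompleteSpace B]
    [NormedAddCommGroup B'] [NormedSpace ℝ B'] [CompleteSpace B']
    (L : B →L[ℝ] B) (t₀ : ℕ)
    (A : B' →L[ℝ] B) (A' : B →L[ℝ] B') (M : B' →L[ℝ] B')
    (hfact : ∀ s : ℕ, L ^ (s + 2*t₀) = A.comp ((M ^ s).comp A'))
    (ρ : ℝ) (hρ0 : 0 ≤ ρ) (hρ1 : ρ < 1)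
    (hM : essSpectralRadius M ≤ ρ) :
    (∀ t : ℕ, essSpectralRadius (L ^ t) ≤ ρ ^ t) ∧ essSpectralRadius L ≤ ρ :=
  stmt19_general L t₀ A A' M hfact ρ hM
end
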